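/- The marginal entropy production rate is nonnegative and bounded by the full entropy production rate (Theorem 'fullmar', outer inequalities): Assume in addition that for all i ≠ j one has W i j > 0 ↔ W j i > 0 (symmetric support), that the kernels of W and of W_hid are one-dimensional, and let r : Fin n → ℝ be strictly positive with ∑ i, r i = 1 and W *ᵥ r = 0 (the steady state). Define the marginal entropy production rate σ₁ := (W a b * r b − W b a * r a) * Q and the full entropy production rate σ := (1/2) * ∑ over ordered pairs (i,j) with i ≠ j and W i j > 0 of (W i j * r j − W j i * r i) * Real.log (W i j * r j / (W j i * r i)). Then 0 ≤ σ₁ and σ₁ ≤ σ. -/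
import Mathlib


open Matrix

lemma log_e1 (x y : ℝ) (hx : 0 < x) (hy : 0 < y) : 0 ≤ (x - y) * Real.log (x / y) := by
  rcases le_total x y with h | h
  · have h1 : x - y ≤ 0 := by linarith
    have h2 : Real.log (x / y) ≤ 0 := Real.log_nonpos (by positivity) ((div_le_one hy).2 h)
    exact mul_nonneg_of_nonpos_of_nonpos h1 h2
  · apply mul_nonneg (by linarith)
    exact Real.log_nonneg ((one_le_div hy).2 h)

lemma log_e2 (x y : ℝ) (hx : 0 < x) (hy : 0 < y) : x - y ≤ x * Real.log (x / y) := by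
  have h := Real.log_le_sub_one_of_pos (show (0:ℝ) < y / x by positivity)
  have hl : Real.log (x / y) = -Real.log (y / x) := by
    rw [← Real.log_inv, inv_div]
  rw [hl]
  have hx' : x ≠ 0 := hx.ne'
  have : x * (y / x - 1) = y - x := by field_simp
  nlinarith

lemma sum_two {n : ℕ} (a b : Fin n) (hab : a ≠ b) (f : Fin n → ℝ)
    (h : ∀ i, i ≠ a → i ≠ b → f i = 0) : ∑ i, f i = f a + f b := by
  rw [← Finset.sum_subset (Finset.subset_univ {a, b})
    (by intro x _ hx
        simp only [Finset.mem_insert, Finset.mem_singleton] at hx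
        push_neg at hx
        exact h x hx.1 hx.2)]
  exact Finset.sum_pair hab

lemma sum_two2 {n : ℕ} (a b : Fin n) (hab : a ≠ b) (f : Fin n → Fin n → ℝ)
    (h : ∀ i j, ¬(i = a ∧ j = b) → ¬(i = b ∧ j = a) → f i j = 0) :
    ∑ i, ∑ j, f i j = f a b + f b a := by
  have ha : ∑ j, f a j = f a b := by
    apply Finset.sum_eq_single b
    · intro j _ hjb
      exact h a j (by tauto) (by tauto)
    · intro hb; exact absurd (Finset.mem_univ b) hb
  have hb : ∑ j, f b j = f b a := by
    apply Finset.sum_eq_single a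
    · intro j _ hja
      exact h b j (by tauto) (by tauto)
    · intro hb; exact absurd (Finset.mem_univ a) hb
  rw [sum_two a b hab _ (by
    intro i hia hib
    apply Finset.sum_eq_zero
    intro j _
    exact h i j (by tauto) (by tauto)), ha, hb]

/-- The marginal entropy production rate is nonnegative and bounded by the full
entropy production rate (Theorem "fullmar", outer inequalities). -/
theorem marginal_EPR_bounds {n : ℕ} (hn : 3 ≤ n)
    (W Whid : Matrix (Fin n) (Fin n) ℝ)
    (hW1 : ∀ i j, i ≠ j → 0 ≤ W i j)
    (hW2 : ∀ j, ∑ i, W i j = 0)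
    (a b : Fin n) (hab : a ≠ b)
    (hWab : 0 < W a b) (hWba : 0 < W b a)
    (hH1 : Whid a b = 0) (hH2 : Whid b a = 0)
    (hH3 : Whid a a = W a a + W b a)
    (hH4 : Whid b b = W b b + W a b)
    (hH5 : ∀ i j, ¬(i = a ∧ j = b) → ¬(i = b ∧ j = a) → ¬(i = a ∧ j = a) →
      ¬(i = b ∧ j = b) → Whid i j = W i j)
    (p : Fin n → ℝ) (hp1 : ∀ i, 0 < p i) (hp2 : ∑ i, p i = 1)
    (hp3 : Whid *ᵥ p = 0)
    (hsymm : ∀ i j : Fin n, i ≠ j → (0 < W i j ↔ 0 < W j i))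
    (hkerW : Module.finrank ℝ (LinearMap.ker W.mulVecLin) = 1)
    (hkerH : Module.finrank ℝ (LinearMap.ker Whid.mulVecLin) = 1)
    (r : Fin n → ℝ) (hr1 : ∀ i, 0 < r i) (hr2 : ∑ i, r i = 1) (hr3 : W *ᵥ r = 0) :
    0 ≤ (W a b * r b - W b a * r a) * Real.log (W a b * p b / (W b a * p a)) ∧
    (W a b * r b - W b a * r a) * Real.log (W a b * p b / (W b a * p a))
      ≤ (1 / 2) * ∑ i : Fin n, ∑ j : Fin n,
          if i ≠ j ∧ 0 < W i j then
            (W i j * r j - W j i * r i) * Real.log (W i j * r j / (W j i * r i))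
          else 0 := by
  -- basic positivity / mulVec facts
  have hp3' : ∀ i, ∑ j, Whid i j * p j = 0 := by
    intro i
    have := congrFun hp3 i
    simpa [Matrix.mulVec, dotProduct] using this
  have hr3' : ∀ i, ∑ j, W i j * r j = 0 := by
    intro i
    have := congrFun hr3 i
    simpa [Matrix.mulVec, dotProduct] using this
  -- entries of Whid off the special pairs
  have hH_entry : ∀ i j, i ≠ j → ¬(i = a ∧ j = b) → ¬(i = b ∧ j = a) → Whid i j = W i j := by
    intro i j hij h1 h2
    exact hH5 i j h1 h2 (by rintro ⟨rfl, rfl⟩; exact hij rfl)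
      (by rintro ⟨rfl, rfl⟩; exact hij rfl)
  have hHnn : ∀ i j, i ≠ j → 0 ≤ Whid i j := by
    intro i j hij
    by_cases h1 : i = a ∧ j = b
    · obtain ⟨rfl, rfl⟩ := h1; rw [hH1]
    by_cases h2 : i = b ∧ j = a
    · obtain ⟨rfl, rfl⟩ := h2; rw [hH2]
    rw [hH_entry i j hij h1 h2]; exact hW1 i j hij
  have hHsymm : ∀ i j, i ≠ j → (0 < Whid i j ↔ 0 < Whid j i) := by
    intro i j hij
    by_cases h1 : i = a ∧ j = b
    · obtain ⟨rfl, rfl⟩ := h1; rw [hH1, hH2]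
    by_cases h2 : i = b ∧ j = a
    · obtain ⟨rfl, rfl⟩ := h2; rw [hH1, hH2]
    rw [hH_entry i j hij h1 h2, hH_entry j i hij.symm (by tauto) (by tauto)]
    exact hsymm i j hij
  -- columns of Whid sum to zero
  have hHcol : ∀ j, ∑ i, Whid i j = 0 := by
    intro j
    by_cases hja : j = a
    · subst hja
      have hrow : ∀ i, Whid i j = W i j +
          (if i = b then -(W b j) else if i = j then W b j else 0) := by
        intro i
        by_cases hib : i = b
        · subst hib; rw [hH2]; simp
        by_cases hij : i = j
        · subst hij; rw [hH3]; simp [hib]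
        · rw [hH_entry i j hij (by tauto) (by tauto)]; simp [hib, hij]
      simp only [hrow]
      rw [Finset.sum_add_distrib, hW2 j,
        sum_two j b hab _ (by intro i hi1 hi2; simp [hi1, hi2])]
      simp [hab]
    by_cases hjb : j = b
    · subst hjb
      have hrow : ∀ i, Whid i j = W i j +
          (if i = a then -(W a j) else if i = j then W a j else 0) := by
        intro i
        by_cases hia : i = a
        · subst hia; rw [hH1]; simp
        by_cases hij : i = j
        · subst hij; rw [hH4]; simp [hia]
        · rw [hH_entry i j hij (by tauto) (by tauto)]; simp [hia, hij]
      simp only [hrow]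
      rw [Finset.sum_add_distrib, hW2 j,
        sum_two j a (Ne.symm hab) _ (by intro i hi1 hi2; simp [hi1, hi2])]
      simp [Ne.symm hab]
    · have hrow : ∀ i, Whid i j = W i j := by
        intro i
        exact hH5 i j (by tauto) (by tauto) (by tauto) (by tauto)
      simp only [hrow]; exact hW2 j
  set J : ℝ := W a b * r b - W b a * r a with hJdef
  -- rows of Whid applied to r
  have hWr : ∀ i, (∑ j, Whid i j * r j) =
      (if i = a then -J else if i = b then J else 0) := by
    intro i
    by_cases hia : i = a
    · subst hia
      have hrow : ∀ j, Whid i j = W i j +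
          (if j = b then -(W i b) else if j = i then W b i else 0) := by
        intro j
        by_cases hjb : j = b
        · subst hjb; rw [hH1]; simp
        by_cases hji : j = i
        · subst hji; rw [hH3]; simp [hjb]
        · rw [hH_entry i j (fun h => hji h.symm) (by tauto) (by tauto)]; simp [hjb, hji]
      simp only [hrow, add_mul, Finset.sum_add_distrib, hr3' i]
      rw [sum_two i b hab _ (by intro x hx1 hx2; simp [hx1, hx2])]
      simp [hab, hJdef]
      ring
    by_cases hib : i = b
    · subst hib
      have hrow : ∀ j, Whid i j = W i j +
          (if j = a then -(W i a) else if j = i then W a i else 0) := by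
        intro j
        by_cases hja : j = a
        · subst hja; rw [hH2]; simp
        by_cases hji : j = i
        · subst hji; rw [hH4]; simp [hja]
        · rw [hH_entry i j (fun h => hji h.symm) (by tauto) (by tauto)]; simp [hja, hji]
      simp only [hrow, add_mul, Finset.sum_add_distrib, hr3' i]
      rw [sum_two i a (Ne.symm hab) _ (by intro x hx1 hx2; simp [hx1, hx2])]
      simp [hab, Ne.symm hab, hJdef]
      ring
    · have hrow : ∀ j, Whid i j = W i j := by
        intro j
        exact hH5 i j (by tauto) (by tauto) (by tauto) (by tauto)
      simp only [hrow, hr3' i]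
      simp [hia, hib]
  set L : ℝ := Real.log (W a b * r b / (W b a * r a)) with hLdef
  -- Step 1: the full EPR sum equals twice the one-sided sum
  have hswap : (∑ i, ∑ j, if i ≠ j ∧ 0 < W i j then
        W j i * r i * Real.log (W i j * r j / (W j i * r i)) else 0)
      = - ∑ i, ∑ j, (if i ≠ j ∧ 0 < W i j then
        W i j * r j * Real.log (W i j * r j / (W j i * r i)) else 0) := by
    rw [Finset.sum_comm, ← Finset.sum_neg_distrib]
    apply Finset.sum_congr rfl
    intro i _
    rw [← Finset.sum_neg_distrib]
    apply Finset.sum_congr rfl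
    intro j _
    by_cases hij : i = j
    · subst hij; simp
    by_cases hw : 0 < W i j
    · have hw' : 0 < W j i := (hsymm i j hij).1 hw
      rw [if_pos ⟨Ne.symm hij, hw'⟩, if_pos ⟨hij, hw⟩,
        show W j i * r i / (W i j * r j) = (W i j * r j / (W j i * r i))⁻¹ from
          (inv_div _ _).symm, Real.log_inv]
      ring
    · have hw' : ¬ 0 < W j i := fun h => hw ((hsymm i j hij).2 h)
      rw [if_neg (by tauto), if_neg (by tauto), neg_zero]
  have hS2T : (∑ i, ∑ j, if i ≠ j ∧ 0 < W i j then
        (W i j * r j - W j i * r i) * Real.log (W i j * r j / (W j i * r i)) else 0)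
      = 2 * ∑ i, ∑ j, (if i ≠ j ∧ 0 < W i j then
        W i j * r j * Real.log (W i j * r j / (W j i * r i)) else 0) := by
    have hu : ∀ i j : Fin n, (if i ≠ j ∧ 0 < W i j then
        (W i j * r j - W j i * r i) * Real.log (W i j * r j / (W j i * r i)) else 0)
      = (if i ≠ j ∧ 0 < W i j then
        W i j * r j * Real.log (W i j * r j / (W j i * r i)) else 0)
      - (if i ≠ j ∧ 0 < W i j then
        W j i * r i * Real.log (W i j * r j / (W j i * r i)) else 0) := by
      intro i j
      by_cases h : i ≠ j ∧ 0 < W i j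
      · rw [if_pos h, if_pos h, if_pos h]; ring
      · rw [if_neg h, if_neg h, if_neg h]; ring
    simp only [hu, Finset.sum_sub_distrib]
    rw [hswap]
    ring
  -- Step 2: split off the (a,b) edge
  have hTsplit : (∑ i, ∑ j, (if i ≠ j ∧ 0 < W i j then
        W i j * r j * Real.log (W i j * r j / (W j i * r i)) else 0))
      = J * L + ∑ i, ∑ j, (if i ≠ j ∧ 0 < Whid i j then
        Whid i j * r j * Real.log (Whid i j * r j / (Whid j i * r i)) else 0) := by
    have key : (∑ i, ∑ j, ((if i ≠ j ∧ 0 < W i j then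
          W i j * r j * Real.log (W i j * r j / (W j i * r i)) else 0)
        - (if i ≠ j ∧ 0 < Whid i j then
          Whid i j * r j * Real.log (Whid i j * r j / (Whid j i * r i)) else 0)))
        = J * L := by
      rw [sum_two2 a b hab _ (by
        intro i j h1 h2
        by_cases hij : i = j
        · subst hij; simp
        · rw [hH_entry i j hij h1 h2, hH_entry j i (Ne.symm hij) (by tauto) (by tauto)]
          exact sub_self _)]
      have cab : (a ≠ b ∧ 0 < W a b) := ⟨hab, hWab⟩
      have cba : (b ≠ a ∧ 0 < W b a) := ⟨Ne.symm hab, hWba⟩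
      have nab : ¬(a ≠ b ∧ 0 < Whid a b) := by
        rintro ⟨-, h⟩; rw [hH1] at h; exact lt_irrefl 0 h
      have nba : ¬(b ≠ a ∧ 0 < Whid b a) := by
        rintro ⟨-, h⟩; rw [hH2] at h; exact lt_irrefl 0 h
      rw [if_pos cab, if_pos cba, if_neg nab, if_neg nba,
        show W b a * r a / (W a b * r b) = (W a b * r b / (W b a * r a))⁻¹ from
          (inv_div _ _).symm, Real.log_inv, hJdef, hLdef]
      ring
    simp only [Finset.sum_sub_distrib] at key
    linarith
  -- Step 3: split hidden EPR term into adiabatic and nonadiabatic parts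
  have hth : ∀ i j : Fin n, (if i ≠ j ∧ 0 < Whid i j then
        Whid i j * r j * Real.log (Whid i j * r j / (Whid j i * r i)) else 0)
      = (if i ≠ j ∧ 0 < Whid i j then
        Whid i j * r j * Real.log (Whid i j * p j / (Whid j i * p i)) else 0)
      + (if i ≠ j ∧ 0 < Whid i j then
        Whid i j * r j * Real.log (r j * p i / (r i * p j)) else 0) := by
    intro i j
    by_cases h : i ≠ j ∧ 0 < Whid i j
    · rw [if_pos h, if_pos h, if_pos h]
      have hji : 0 < Whid j i := (hHsymm i j h.1).1 h.2
      have e : Real.log (Whid i j * r j / (Whid j i * r i))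
          = Real.log (Whid i j * p j / (Whid j i * p i))
            + Real.log (r j * p i / (r i * p j)) := by
        rw [Real.log_div (mul_pos h.2 (hr1 j)).ne' (mul_pos hji (hr1 i)).ne',
            Real.log_div (mul_pos h.2 (hp1 j)).ne' (mul_pos hji (hp1 i)).ne',
            Real.log_div (mul_pos (hr1 j) (hp1 i)).ne' (mul_pos (hr1 i) (hp1 j)).ne',
            Real.log_mul h.2.ne' (hr1 j).ne', Real.log_mul hji.ne' (hr1 i).ne',
            Real.log_mul h.2.ne' (hp1 j).ne', Real.log_mul hji.ne' (hp1 i).ne',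
            Real.log_mul (hr1 j).ne' (hp1 i).ne', Real.log_mul (hr1 i).ne' (hp1 j).ne']
        ring
      rw [e]; ring
    · rw [if_neg h, if_neg h, if_neg h]; ring
  set g : Fin n → ℝ := fun i => Real.log (p i / r i) with hgdef
  -- Step 4: nonadiabatic sum identity
  have hCid : (∑ i, ∑ j, (if i ≠ j ∧ 0 < Whid i j then
        Whid i j * r j * Real.log (r j * p i / (r i * p j)) else 0))
      = J * g b - J * g a := by
    have hpt : ∀ i j : Fin n, (if i ≠ j ∧ 0 < Whid i j then
          Whid i j * r j * Real.log (r j * p i / (r i * p j)) else 0)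
        = Whid i j * r j * g i - Whid i j * r j * g j := by
      intro i j
      by_cases hij : i = j
      · subst hij; rw [if_neg (by tauto)]; ring
      by_cases hw : 0 < Whid i j
      · rw [if_pos ⟨hij, hw⟩]
        have e : Real.log (r j * p i / (r i * p j)) = g i - g j := by
          rw [hgdef]; simp only
          rw [Real.log_div (mul_pos (hr1 j) (hp1 i)).ne' (mul_pos (hr1 i) (hp1 j)).ne',
            Real.log_mul (hr1 j).ne' (hp1 i).ne', Real.log_mul (hr1 i).ne' (hp1 j).ne',
            Real.log_div (hp1 i).ne' (hr1 i).ne', Real.log_div (hp1 j).ne' (hr1 j).ne']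
          ring
        rw [e]; ring
      · have hz : Whid i j = 0 := le_antisymm (not_lt.mp hw) (hHnn i j hij)
        rw [if_neg (by tauto), hz]; ring
    simp only [hpt, Finset.sum_sub_distrib]
    have h1 : (∑ i, ∑ j, Whid i j * r j * g i) = J * g b - J * g a := by
      have hfac : ∀ i : Fin n, (∑ j, Whid i j * r j * g i)
          = (∑ j, Whid i j * r j) * g i := by
        intro i; rw [Finset.sum_mul]
      simp only [hfac, hWr]
      rw [sum_two a b hab _ (by intro i h1 h2; simp [h1, h2])]
      simp [hab, Ne.symm hab]
      ring
    have h2 : (∑ i, ∑ j, Whid i j * r j * g j) = 0 := by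
      rw [Finset.sum_comm]
      apply Finset.sum_eq_zero
      intro j _
      have hfac : ∀ i : Fin n, Whid i j * r j * g j = Whid i j * (r j * g j) := by
        intro i; ring
      simp only [hfac]
      rw [← Finset.sum_mul, hHcol j, zero_mul]
    rw [h1, h2]; ring
  -- Step 5: adiabatic sum is nonnegative
  have hApos : 0 ≤ ∑ i, ∑ j, (if i ≠ j ∧ 0 < Whid i j then
        Whid i j * r j * Real.log (Whid i j * p j / (Whid j i * p i)) else 0) := by
    have hlow : ∀ i j : Fin n, (if i ≠ j ∧ 0 < Whid i j then
          Whid i j * r j - Whid j i * p i * (r j / p j) else 0)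
        ≤ (if i ≠ j ∧ 0 < Whid i j then
          Whid i j * r j * Real.log (Whid i j * p j / (Whid j i * p i)) else 0) := by
      intro i j
      by_cases h : i ≠ j ∧ 0 < Whid i j
      · rw [if_pos h, if_pos h]
        have hji : 0 < Whid j i := (hHsymm i j h.1).1 h.2
        have key := log_e2 (Whid i j * p j) (Whid j i * p i)
          (mul_pos h.2 (hp1 j)) (mul_pos hji (hp1 i))
        have hrp : (0:ℝ) ≤ r j / p j := (div_pos (hr1 j) (hp1 j)).le
        have hm := mul_le_mul_of_nonneg_left key hrp
        have hpj : p j ≠ 0 := (hp1 j).ne'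
        have e1 : r j / p j * (Whid i j * p j - Whid j i * p i)
            = Whid i j * r j - Whid j i * p i * (r j / p j) := by
          field_simp
        have e2 : r j / p j * (Whid i j * p j * Real.log (Whid i j * p j / (Whid j i * p i)))
            = Whid i j * r j * Real.log (Whid i j * p j / (Whid j i * p i)) := by
          field_simp
        linarith
      · rw [if_neg h, if_neg h]
    have hmono := Finset.sum_le_sum (fun i (_ : i ∈ Finset.univ) =>
      Finset.sum_le_sum (fun j (_ : j ∈ Finset.univ) => hlow i j))
    have hzero : (∑ i, ∑ j, (if i ≠ j ∧ 0 < Whid i j then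
          Whid i j * r j - Whid j i * p i * (r j / p j) else 0)) = 0 := by
      have e : ∀ i j : Fin n, (if i ≠ j ∧ 0 < Whid i j then
            Whid i j * r j - Whid j i * p i * (r j / p j) else 0)
          = (Whid i j - (if i = j then Whid i j else 0)) * r j
            - (Whid j i * p i - (if i = j then Whid j i * p i else 0)) * (r j / p j) := by
        intro i j
        by_cases hij : i = j
        · subst hij; rw [if_neg (by tauto), if_pos rfl, if_pos rfl]; ring
        by_cases hw : 0 < Whid i j
        · rw [if_pos ⟨hij, hw⟩, if_neg hij, if_neg hij]; ring
        · have hz : Whid i j = 0 := le_antisymm (not_lt.mp hw) (hHnn i j hij)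
          have hnlt : ¬ 0 < Whid j i := fun hh => hw ((hHsymm j i (Ne.symm hij)).1 hh)
          have hz' : Whid j i = 0 := le_antisymm (not_lt.mp hnlt) (hHnn j i (Ne.symm hij))
          rw [if_neg (by tauto), hz, hz', if_neg hij, if_neg hij]; ring
      simp only [e, Finset.sum_sub_distrib]
      have hA1 : (∑ i, ∑ j, (Whid i j - (if i = j then Whid i j else 0)) * r j)
          = ∑ j, -(Whid j j * r j) := by
        rw [Finset.sum_comm]
        apply Finset.sum_congr rfl
        intro j _
        have hs : (∑ i, (Whid i j - (if i = j then Whid i j else 0))) = -(Whid j j) := by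
          rw [Finset.sum_sub_distrib, hHcol j]
          simp
        rw [← Finset.sum_mul, hs]; ring
      have hA2 : (∑ i, ∑ j, (Whid j i * p i - (if i = j then Whid j i * p i else 0)) * (r j / p j))
          = ∑ j, -(Whid j j * r j) := by
        rw [Finset.sum_comm]
        apply Finset.sum_congr rfl
        intro j _
        have hs : (∑ i, (Whid j i * p i - (if i = j then Whid j i * p i else 0)))
            = -(Whid j j * p j) := by
          rw [Finset.sum_sub_distrib, hp3' j]
          simp
        rw [← Finset.sum_mul, hs]
        have hpj : p j ≠ 0 := (hp1 j).ne'
        field_simp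
      rw [hA1, hA2]
      ring
    linarith
  -- Step 6: nonadiabatic sum is nonnegative
  have hCpos : 0 ≤ ∑ i, ∑ j, (if i ≠ j ∧ 0 < Whid i j then
        Whid i j * r j * Real.log (r j * p i / (r i * p j)) else 0) := by
    have hlow : ∀ i j : Fin n, (if i ≠ j ∧ 0 < Whid i j then
          Whid i j * r j - Whid i j * p j * (r i / p i) else 0)
        ≤ (if i ≠ j ∧ 0 < Whid i j then
          Whid i j * r j * Real.log (r j * p i / (r i * p j)) else 0) := by
      intro i j
      by_cases h : i ≠ j ∧ 0 < Whid i j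
      · rw [if_pos h, if_pos h]
        have key := log_e2 (r j * p i) (r i * p j)
          (mul_pos (hr1 j) (hp1 i)) (mul_pos (hr1 i) (hp1 j))
        have hrp : (0:ℝ) ≤ Whid i j / p i := (div_pos h.2 (hp1 i)).le
        have hm := mul_le_mul_of_nonneg_left key hrp
        have hpi : p i ≠ 0 := (hp1 i).ne'
        have e1 : Whid i j / p i * (r j * p i - r i * p j)
            = Whid i j * r j - Whid i j * p j * (r i / p i) := by
          field_simp
        have e2 : Whid i j / p i * (r j * p i * Real.log (r j * p i / (r i * p j)))
            = Whid i j * r j * Real.log (r j * p i / (r i * p j)) := by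
          field_simp
        linarith
      · rw [if_neg h, if_neg h]
    have hmono := Finset.sum_le_sum (fun i (_ : i ∈ Finset.univ) =>
      Finset.sum_le_sum (fun j (_ : j ∈ Finset.univ) => hlow i j))
    have hzero : (∑ i, ∑ j, (if i ≠ j ∧ 0 < Whid i j then
          Whid i j * r j - Whid i j * p j * (r i / p i) else 0)) = 0 := by
      have e : ∀ i j : Fin n, (if i ≠ j ∧ 0 < Whid i j then
            Whid i j * r j - Whid i j * p j * (r i / p i) else 0)
          = (Whid i j - (if i = j then Whid i j else 0)) * r j
            - (Whid i j * p j - (if j = i then Whid i j * p j else 0)) * (r i / p i) := by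
        intro i j
        by_cases hij : i = j
        · subst hij; rw [if_neg (by tauto), if_pos rfl, if_pos rfl]; ring
        by_cases hw : 0 < Whid i j
        · rw [if_pos ⟨hij, hw⟩, if_neg hij, if_neg (Ne.symm hij)]; ring
        · have hz : Whid i j = 0 := le_antisymm (not_lt.mp hw) (hHnn i j hij)
          rw [if_neg (by tauto), hz, if_neg hij, if_neg (Ne.symm hij)]; ring
      simp only [e, Finset.sum_sub_distrib]
      have hC1 : (∑ i, ∑ j, (Whid i j - (if i = j then Whid i j else 0)) * r j)
          = ∑ j, -(Whid j j * r j) := by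
        rw [Finset.sum_comm]
        apply Finset.sum_congr rfl
        intro j _
        have hs : (∑ i, (Whid i j - (if i = j then Whid i j else 0))) = -(Whid j j) := by
          rw [Finset.sum_sub_distrib, hHcol j]
          simp
        rw [← Finset.sum_mul, hs]; ring
      have hC2 : (∑ i, ∑ j, (Whid i j * p j - (if j = i then Whid i j * p j else 0)) * (r i / p i))
          = ∑ i, -(Whid i i * r i) := by
        apply Finset.sum_congr rfl
        intro i _
        have hs : (∑ j, (Whid i j * p j - (if j = i then Whid i j * p j else 0)))
            = -(Whid i i * p i) := by
          rw [Finset.sum_sub_distrib, hp3' i]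
          simp
        rw [← Finset.sum_mul, hs]
        have hpi : p i ≠ 0 := (hp1 i).ne'
        field_simp
      rw [hC1, hC2]
      ring
    linarith
  -- Step 7: relate the two log-affinities
  have hQL : Real.log (W a b * p b / (W b a * p a)) = L + (g b - g a) := by
    rw [hLdef, hgdef]; simp only
    rw [Real.log_div (mul_pos hWab (hp1 b)).ne' (mul_pos hWba (hp1 a)).ne',
        Real.log_div (mul_pos hWab (hr1 b)).ne' (mul_pos hWba (hr1 a)).ne',
        Real.log_mul hWab.ne' (hp1 b).ne', Real.log_mul hWba.ne' (hp1 a).ne',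
        Real.log_mul hWab.ne' (hr1 b).ne', Real.log_mul hWba.ne' (hr1 a).ne',
        Real.log_div (hp1 b).ne' (hr1 b).ne', Real.log_div (hp1 a).ne' (hr1 a).ne']
    ring
  have hJL : 0 ≤ J * L := by
    rw [hJdef, hLdef]
    exact log_e1 _ _ (mul_pos hWab (hr1 b)) (mul_pos hWba (hr1 a))
  -- Final assembly
  have hexp : J * (L + (g b - g a)) = J * L + (J * g b - J * g a) := by ring
  constructor
  · rw [hQL, hexp, ← hCid]
    exact add_nonneg hJL hCpos
  · rw [hQL, hexp, hS2T, hTsplit]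
    simp only [hth, Finset.sum_add_distrib]
    rw [hCid]
    linarith
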